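/- Fix an integer t ≥ 0 and k = 2t+1. For n > k and 0 ≤ j ≤ n−1 let w_{n,j} = p_n(j)·(A_1(j) + A_2(j)) with buffer parameter α = 1/2 (so T = 2(n−1)/3), and let the shape function be w(z) = 2·[1/3 < z < 1/2 or 2/3 < z ≤ 1]·z^t·(1−z)^t / B(t+1, t+1) for z ∈ [0,1]. Then Σ_{j=0}^{n−1} |w_{n,j} − ∫_{j/n}^{(j+1)/n} w(z) dz| = O(n^{−1}) as n → ∞. -/

import Mathlib

open scoped Classical

/-- The beta function `B(a,b) = ∫_0^1 z^(a-1) (1-z)^(b-1) dz`. -/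
noncomputable def betaFun (a b : ℝ) : ℝ := ∫ z in (0:ℝ)..1, z ^ (a - 1) * (1 - z) ^ (b - 1)

/-- The regularized incomplete beta function `I_{x,y}(a,b)`. -/
noncomputable def regIncBeta (x y a b : ℝ) : ℝ :=
  (∫ z in x..y, z ^ (a - 1) * (1 - z) ^ (b - 1)) / betaFun a b

/-- The probability `P(I = i)` for `I ~ BetaBin(n,a,b)`. -/
noncomputable def betaBinPMF (n : ℕ) (a b : ℝ) (i : ℕ) : ℝ :=
  (n.choose i : ℝ) * betaFun (a + i) (b + ((n - i : ℕ) : ℝ)) / betaFun a b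

/-- The `m`-th harmonic number. -/
noncomputable def harm (m : ℕ) : ℝ := ∑ i ∈ Finset.range m, (1 : ℝ) / (i + 1)

/-- `p_n(j) = P(t + I = j)` for `I ~ BetaBin(n-k, t+1, t+1)`, `k = 2t+1`. -/
noncomputable def pnn (t n j : ℕ) : ℝ :=
  if t ≤ j then betaBinPMF (n - (2 * t + 1)) ((t : ℝ) + 1) ((t : ℝ) + 1) (j - t) else 0

/-- The indicator `A₁(j)` (with `j' = (n-1)-j` and `T = (n-1)/(1+α)`):
`[j ≤ T ∧ j' ≤ T ∧ j ≤ j'] + [j > T]`. -/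
noncomputable def indA1 (α : ℝ) (n j : ℕ) : ℝ :=
  (if (j : ℝ) ≤ ((n : ℝ) - 1) / (1 + α) ∧ ((n : ℝ) - 1 - j) ≤ ((n : ℝ) - 1) / (1 + α)
      ∧ (j : ℝ) ≤ (n : ℝ) - 1 - j then 1 else 0)
  + (if ((n : ℝ) - 1) / (1 + α) < (j : ℝ) then 1 else 0)

/-- The indicator `A₂(j)` (with `j' = (n-1)-j` and `T = (n-1)/(1+α)`):
`[j ≤ T ∧ j' ≤ T ∧ j < j'] + [j > T]`. -/
noncomputable def indA2 (α : ℝ) (n j : ℕ) : ℝ :=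
  (if (j : ℝ) ≤ ((n : ℝ) - 1) / (1 + α) ∧ ((n : ℝ) - 1 - j) ≤ ((n : ℝ) - 1) / (1 + α)
      ∧ (j : ℝ) < (n : ℝ) - 1 - j then 1 else 0)
  + (if ((n : ℝ) - 1) / (1 + α) < (j : ℝ) then 1 else 0)

/-!
By the Beta integral, `p_n(j) · B(t+1, t+1) = j^(t) (n-1-j)^(t) / n^(2t+1)` with falling powers
`x^(k) = x (x-1) ⋯ (x-k+1)`.
Dividing every factor by `n`, this is `1/n` times a quotient of products of factors in `[-1, 1]`,
each within `O(1/n)` of `j/n`, `1 - j/n` or `1`, so it lies within `O(n⁻²)` of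
`(j/n)^t (1 - j/n)^t / n`; as `z^t (1-z)^t` is `t`-Lipschitz on `[0, 1]`, that is in turn within
`O(n⁻²)` of the integral of `z^t (1-z)^t` over the cell `[j/n, (j+1)/n]`. For `α = 1/2` the
multiplier `A₁(j) + A₂(j)` equals twice the indicator in `w` on the whole cell unless `j` lies
within `2` of `n/3`, `n/2` or `2n/3`. So all but `15` cells contribute `O(n⁻²)` and the rest
`O(n⁻¹)` each.
-/

open Finset MeasureTheory

lemma betaFun_eq_beta {a b : ℝ} (ha : 0 < a) (hb : 0 < b) :
    betaFun a b = ProbabilityTheory.beta a b := by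
  have hcongr : ∫ x in (0:ℝ)..1, (x : ℂ) ^ ((a : ℂ) - 1) * (1 - (x : ℂ)) ^ ((b : ℂ) - 1)
      = ∫ x in (0:ℝ)..1, ((x ^ (a - 1) * (1 - x) ^ (b - 1) : ℝ) : ℂ) := by
    refine intervalIntegral.integral_congr fun x hx => ?_
    rw [Set.uIcc_of_le zero_le_one] at hx
    push_cast
    rw [Complex.ofReal_cpow hx.1, Complex.ofReal_cpow (sub_nonneg.2 hx.2)]
    push_cast
    ring_nf
  rw [ProbabilityTheory.beta_eq_betaIntegralReal a b ha hb, Complex.betaIntegral, hcongr,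
    intervalIntegral.integral_ofReal, Complex.ofReal_re, betaFun]

lemma betaFun_natCast_add_one (p q : ℕ) :
    betaFun ((p : ℝ) + 1) ((q : ℝ) + 1)
      = (p.factorial * q.factorial : ℝ) / (p + q + 1).factorial := by
  rw [betaFun_eq_beta (by positivity) (by positivity), ProbabilityTheory.beta,
    show (p : ℝ) + 1 + ((q : ℝ) + 1) = ((p + q + 1 : ℕ) : ℝ) + 1 by push_cast; ring,
    Real.Gamma_nat_eq_factorial, Real.Gamma_nat_eq_factorial, Real.Gamma_nat_eq_factorial]

lemma betaFun_natCast_add_one_pos (p q : ℕ) : 0 < betaFun ((p : ℝ) + 1) ((q : ℝ) + 1) := by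
  rw [betaFun_natCast_add_one]; positivity

lemma betaBinPMF_mul_betaFun (m i a b : ℕ) (hi : i ≤ m) :
    betaBinPMF m ((a : ℝ) + 1) ((b : ℝ) + 1) i * betaFun ((a : ℝ) + 1) ((b : ℝ) + 1)
      = ((a + i).descFactorial a * (b + (m - i)).descFactorial b : ℝ)
        / (m + a + b + 1).descFactorial (a + b + 1) := by
  rw [betaBinPMF, div_mul_cancel₀ _ (betaFun_natCast_add_one_pos a b).ne',
    show (a : ℝ) + 1 + i = ((a + i : ℕ) : ℝ) + 1 by push_cast; ring,
    show (b : ℝ) + 1 + ((m - i : ℕ) : ℝ) = ((b + (m - i) : ℕ) : ℝ) + 1 by push_cast; ring,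
    betaFun_natCast_add_one, show a + i + (b + (m - i)) + 1 = m + a + b + 1 by omega,
    mul_div_assoc', div_eq_div_iff (by positivity)
      (Nat.cast_ne_zero.2 (Nat.descFactorial_eq_zero_iff_lt.not.2 (by omega)))]
  have hA := Nat.factorial_mul_descFactorial (Nat.le_add_right a i)
  have hB := Nat.factorial_mul_descFactorial (Nat.le_add_right b (m - i))
  have hM := Nat.factorial_mul_descFactorial (show a + b + 1 ≤ m + a + b + 1 by omega)
  rw [Nat.add_sub_cancel_left] at hA hB
  rw [show m + a + b + 1 - (a + b + 1) = m by omega] at hM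
  rw [← hA, ← hB, ← hM, ← Nat.choose_mul_factorial_mul_factorial hi]
  push_cast
  ring

lemma natCast_descFactorial_eq_prod (x k : ℕ) :
    (x.descFactorial k : ℝ) = ∏ r ∈ range k, ((x : ℝ) - r) := by
  rw [← descPochhammer_eval_eq_descFactorial, descPochhammer_eval_eq_prod_range]

-- For `j < t` or `n - 1 - j < t` both sides vanish: one of the falling powers has a zero factor.
lemma pnn_mul_betaFun {t n j : ℕ} (hn : 2 * t + 1 ≤ n) (hj : j < n) :
    pnn t n j * betaFun ((t : ℝ) + 1) ((t : ℝ) + 1)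
      = (∏ r ∈ range t, ((j : ℝ) - r)) * (∏ r ∈ range t, ((n : ℝ) - 1 - j - r))
        / ∏ r ∈ range (2 * t + 1), ((n : ℝ) - r) := by
  have hcast : (n : ℝ) - 1 - j = ((n - 1 - j : ℕ) : ℝ) := by
    rw [Nat.cast_sub (by omega), Nat.cast_sub (by omega)]; push_cast; ring
  simp only [hcast, ← natCast_descFactorial_eq_prod]
  by_cases hjt : j < t
  · rw [pnn, if_neg (by omega), Nat.descFactorial_eq_zero_iff_lt.2 hjt]; simp
  by_cases hjt' : n - 1 - j < t
  · have hchoose : (n - (2 * t + 1)).choose (j - t) = 0 := Nat.choose_eq_zero_of_lt (by omega)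
    rw [pnn, if_pos (by omega), betaBinPMF, hchoose, Nat.descFactorial_eq_zero_iff_lt.2 hjt']
    simp
  rw [pnn, if_pos (by omega), betaBinPMF_mul_betaFun _ _ _ _ (by omega)]
  congr 4 <;> omega

lemma abs_prod_sub_pow_le {ι : Type*} (s : Finset ι) {f : ι → ℝ} {c d : ℝ}
    (hf : ∀ i ∈ s, |f i| ≤ 1) (hc : |c| ≤ 1) (hd : ∀ i ∈ s, |f i - c| ≤ d) :
    |∏ i ∈ s, f i - c ^ s.card| ≤ s.card * d := by
  classical
  induction s using Finset.induction_on with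
  | empty => simp
  | insert a s ha ih =>
    simp only [mem_insert, forall_eq_or_imp] at hf hd
    rw [prod_insert ha, card_insert_of_notMem ha, pow_succ', Nat.cast_succ]
    have hprod : |∏ i ∈ s, f i| ≤ 1 := by
      rw [abs_prod]; exact prod_le_one (fun _ _ => abs_nonneg _) hf.2
    have hd0 : 0 ≤ d := (abs_nonneg _).trans hd.1
    calc |f a * ∏ i ∈ s, f i - c * c ^ s.card|
        = |(f a - c) * ∏ i ∈ s, f i + c * (∏ i ∈ s, f i - c ^ s.card)| := by ring_nf
      _ ≤ |f a - c| * |∏ i ∈ s, f i| + |c| * |∏ i ∈ s, f i - c ^ s.card| := by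
        rw [← abs_mul, ← abs_mul]; exact abs_add_le _ _
      _ ≤ d * 1 + 1 * (s.card * d) :=
        add_le_add (mul_le_mul hd.1 hprod (abs_nonneg _) hd0)
          (mul_le_mul hc (ih hf.2 hd.2) (abs_nonneg _) zero_le_one)
      _ = (s.card + 1) * d := by ring

lemma abs_div_sub_le {a c w : ℝ} (hw : 0 < w) :
    |a / w - c| ≤ (|a - c| + |c| * |w - 1|) / w := by
  rw [show a / w - c = ((a - c) - c * (w - 1)) / w by field_simp; ring, abs_div, abs_of_pos hw,
    ← abs_mul]
  gcongr
  exact abs_sub _ _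

lemma abs_div_le_one_of_abs_le {a N : ℝ} (hN : 0 < N) (h : |a| ≤ N) : |a / N| ≤ 1 := by
  rw [abs_div, abs_of_pos hN]; exact (div_le_one hN).2 h

lemma abs_prod_scaled_sub_pow_le {t : ℕ} {X N : ℝ} (hN : 0 < N) (ht : (t : ℝ) ≤ N)
    (hX : 0 ≤ X) (hXN : X + 1 ≤ N) :
    |∏ r ∈ range t, ((X - r) / N * ((N - 1 - X - r) / N)) - (X / N * (1 - X / N)) ^ t|
      ≤ t * (2 * t / N) := by
  have hx : |X / N| ≤ 1 := abs_div_le_one_of_abs_le hN (abs_le.2 ⟨by linarith, by linarith⟩)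
  have hy : |1 - X / N| ≤ 1 := by
    rw [show 1 - X / N = (N - X) / N by field_simp]
    exact abs_div_le_one_of_abs_le hN (abs_le.2 ⟨by linarith, by linarith⟩)
  have := abs_prod_sub_pow_le (range t) (c := X / N * (1 - X / N)) (d := 2 * t / N)
    (f := fun r : ℕ => (X - r) / N * ((N - 1 - X - r) / N))
    (fun r hr => by
      have : (r : ℝ) + 1 ≤ t := by exact_mod_cast mem_range.1 hr
      rw [abs_mul]
      exact mul_le_one₀ (abs_div_le_one_of_abs_le hN (abs_le.2 ⟨by linarith, by linarith⟩))
        (abs_nonneg _) (abs_div_le_one_of_abs_le hN (abs_le.2 ⟨by linarith, by linarith⟩)))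
    (by rw [abs_mul]; exact mul_le_one₀ hx (abs_nonneg _) hy)
    (fun r hr => by
      have : (r : ℝ) + 1 ≤ t := by exact_mod_cast mem_range.1 hr
      have hv : |(N - 1 - X - r) / N| ≤ 1 :=
        abs_div_le_one_of_abs_le hN (abs_le.2 ⟨by linarith, by linarith⟩)
      rw [show (X - r) / N * ((N - 1 - X - r) / N) - X / N * (1 - X / N)
          = -(r / N * ((N - 1 - X - r) / N) + X / N * ((r + 1) / N)) by field_simp; ring,
        abs_neg]
      refine (abs_add_le _ _).trans ?_
      rw [abs_mul, abs_mul, abs_of_nonneg (by positivity : (0 : ℝ) ≤ r / N),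
        abs_of_nonneg (by positivity : (0 : ℝ) ≤ (r + 1) / N)]
      calc r / N * |(N - 1 - X - r) / N| + |X / N| * ((r + 1) / N)
          ≤ r / N * 1 + 1 * ((r + 1) / N) := by gcongr
        _ ≤ 2 * t / N := by rw [mul_one, one_mul, ← add_div]; gcongr; linarith)
  rwa [card_range] at this

lemma abs_prod_one_sub_div_sub_one_le {k : ℕ} {N : ℝ} (hN : 0 < N) (hk : (k : ℝ) ≤ N) :
    |∏ r ∈ range (k + 1), ((N - r) / N) - 1| ≤ (k + 1) * (k / N) := by
  have := abs_prod_sub_pow_le (range (k + 1)) (c := 1) (d := k / N)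
    (f := fun r : ℕ => (N - r) / N)
    (fun r hr => by
      have : (r : ℝ) ≤ k := by exact_mod_cast Nat.lt_succ_iff.1 (mem_range.1 hr)
      have : (0 : ℝ) ≤ r := r.cast_nonneg
      exact abs_div_le_one_of_abs_le hN (abs_le.2 ⟨by linarith, by linarith⟩))
    (by simp)
    (fun r hr => by
      have : (r : ℝ) ≤ k := by exact_mod_cast Nat.lt_succ_iff.1 (mem_range.1 hr)
      rw [show (N - r) / N - 1 = -(r / N) by field_simp; ring, abs_neg,
        abs_of_nonneg (by positivity)]
      gcongr)
  rwa [card_range, one_pow, Nat.cast_add_one] at this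

lemma half_pow_le_prod_one_sub_div {k : ℕ} {N : ℝ} (hN : 0 < N) (hk : 2 * (k : ℝ) ≤ N) :
    (1 / 2) ^ (k + 1) ≤ ∏ r ∈ range (k + 1), ((N - r) / N) := by
  calc ((1 : ℝ) / 2) ^ (k + 1) = ∏ _r ∈ range (k + 1), (1 / 2 : ℝ) := by simp
    _ ≤ _ := prod_le_prod (fun _ _ => by norm_num) fun r hr => by
      have : (r : ℝ) ≤ k := by exact_mod_cast Nat.lt_succ_iff.1 (mem_range.1 hr)
      rw [le_div_iff₀ hN]
      linarith

lemma abs_descFactorial_ratio_sub_le {t : ℕ} {X N : ℝ} (hN : 4 * (t : ℝ) < N) (hX : 0 ≤ X)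
    (hXN : X + 1 ≤ N) :
    |(∏ r ∈ range t, (X - r)) * (∏ r ∈ range t, (N - 1 - X - r))
        / ∏ r ∈ range (2 * t + 1), (N - r) - (X / N * (1 - X / N)) ^ t / N|
      ≤ 4 ^ (t + 1) * t * (3 * t + 1) / N ^ 2 := by
  have ht : (0 : ℝ) ≤ t := Nat.cast_nonneg t
  have hN0 : 0 < N := by linarith
  set A := ∏ r ∈ range t, ((X - r) / N * ((N - 1 - X - r) / N))
  set W := ∏ r ∈ range (2 * t + 1), ((N - r) / N)
  set c := (X / N * (1 - X / N)) ^ t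
  have hA : |A - c| ≤ t * (2 * t / N) := abs_prod_scaled_sub_pow_le hN0 (by linarith) hX hXN
  have hW : |W - 1| ≤ (2 * t + 1) * (2 * t / N) := by
    have := abs_prod_one_sub_div_sub_one_le hN0 (k := 2 * t) (by push_cast; linarith)
    rwa [Nat.cast_mul, Nat.cast_ofNat] at this
  have hWlow : (1 / 2) ^ (2 * t + 1) ≤ W :=
    half_pow_le_prod_one_sub_div hN0 (k := 2 * t) (by push_cast; linarith)
  have hc : |c| ≤ 1 := by
    rw [abs_pow, abs_mul]
    refine pow_le_one₀ (by positivity) (mul_le_one₀ ?_ (abs_nonneg _) ?_)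
    · exact abs_div_le_one_of_abs_le hN0 (abs_le.2 ⟨by linarith, by linarith⟩)
    · rw [show 1 - X / N = (N - X) / N by field_simp]
      exact abs_div_le_one_of_abs_le hN0 (abs_le.2 ⟨by linarith, by linarith⟩)
  have hW0 : 0 < W := lt_of_lt_of_le (by positivity) hWlow
  have hP : (∏ r ∈ range t, (X - r)) * (∏ r ∈ range t, (N - 1 - X - r))
      / ∏ r ∈ range (2 * t + 1), (N - r) = A / W / N := by
    have : 0 < ∏ r ∈ range (2 * t + 1), (N - r) := prod_pos fun r hr => by
      have : (r : ℝ) + 1 ≤ 2 * t + 1 := by exact_mod_cast mem_range.1 hr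
      linarith
    simp only [A, W, prod_mul_distrib, prod_div_distrib, prod_const, card_range]
    field_simp
    ring
  rw [hP, ← sub_div, abs_div, abs_of_pos hN0]
  calc |A / W - c| / N ≤ (|A - c| + |c| * |W - 1|) / W / N := by gcongr; exact abs_div_sub_le hW0
    _ ≤ (t * (2 * t / N) + 1 * ((2 * t + 1) * (2 * t / N))) / (1 / 2) ^ (2 * t + 1) / N := by
        gcongr
    _ = 4 ^ (t + 1) * t * (3 * t + 1) / N ^ 2 := by
        rw [one_div_pow, show (4 : ℝ) ^ (t + 1) = 2 * 2 ^ (2 * t + 1) by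
          rw [pow_succ, pow_succ, pow_mul]; norm_num; ring]
        field_simp
        ring

lemma abs_integral_sub_mul_le {g : ℝ → ℝ} {a b δ : ℝ} (hab : a ≤ b)
    (hg : IntervalIntegrable g volume a b) (hδ : ∀ z ∈ Set.Icc a b, |g z - g a| ≤ δ) :
    |(∫ z in a..b, g z) - (b - a) * g a| ≤ δ * (b - a) := by
  rw [← smul_eq_mul, ← intervalIntegral.integral_const,
    ← intervalIntegral.integral_sub hg intervalIntegrable_const]
  have := intervalIntegral.norm_integral_le_of_norm_le_const (a := a) (b := b)
    (f := fun z => g z - g a) (C := δ)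
    fun z hz => hδ z (Set.uIcc_of_le hab ▸ Set.uIoc_subset_uIcc hz)
  rwa [abs_of_nonneg (sub_nonneg.2 hab)] at this

lemma abs_mul_one_sub_le_one {z : ℝ} (hz : z ∈ Set.Icc (0 : ℝ) 1) : |z * (1 - z)| ≤ 1 := by
  obtain ⟨hz0, hz1⟩ := hz
  rw [abs_le]; constructor <;> nlinarith

lemma abs_pow_mul_one_sub_le_one (t : ℕ) {z : ℝ} (hz : z ∈ Set.Icc (0 : ℝ) 1) :
    |(z * (1 - z)) ^ t| ≤ 1 := by
  rw [abs_pow]; exact pow_le_one₀ (abs_nonneg _) (abs_mul_one_sub_le_one hz)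

lemma abs_pow_mul_one_sub_sub_le (t : ℕ) {z c : ℝ} (hz : z ∈ Set.Icc (0 : ℝ) 1)
    (hc : c ∈ Set.Icc (0 : ℝ) 1) :
    |(z * (1 - z)) ^ t - (c * (1 - c)) ^ t| ≤ t * |z - c| := by
  have hdiff : |z * (1 - z) - c * (1 - c)| ≤ |z - c| := by
    rw [show z * (1 - z) - c * (1 - c) = (z - c) * (1 - z - c) by ring, abs_mul]
    exact mul_le_of_le_one_right (abs_nonneg _)
      (abs_le.2 ⟨by linarith [hz.2, hc.2], by linarith [hz.1, hc.1]⟩)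
  have hmax : max |z * (1 - z)| |c * (1 - c)| ^ (t - 1) ≤ 1 :=
    pow_le_one₀ (le_max_of_le_left (abs_nonneg _))
      (max_le (abs_mul_one_sub_le_one hz) (abs_mul_one_sub_le_one hc))
  calc |(z * (1 - z)) ^ t - (c * (1 - c)) ^ t|
      ≤ |z * (1 - z) - c * (1 - c)| * t * max |z * (1 - z)| |c * (1 - c)| ^ (t - 1) :=
        abs_pow_sub_pow_le _ _ _
    _ ≤ |z - c| * t * 1 :=
        mul_le_mul (mul_le_mul_of_nonneg_right hdiff (Nat.cast_nonneg t)) hmax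
          (by positivity) (by positivity)
    _ = t * |z - c| := by ring

lemma cell_subset_Icc {n j : ℕ} (hj : j < n) :
    Set.Icc ((j : ℝ) / n) (((j : ℝ) + 1) / n) ⊆ Set.Icc 0 1 := by
  have hn : (0 : ℝ) < n := by exact_mod_cast (Nat.zero_lt_of_lt hj)
  have hj' : (j : ℝ) + 1 ≤ n := by exact_mod_cast hj
  exact Set.Icc_subset_Icc (by positivity) ((div_le_one hn).2 hj')

lemma abs_integral_cell_le {f : ℝ → ℝ} {M : ℝ} {n j : ℕ} (hj : j < n)
    (hf : ∀ z ∈ Set.Icc (0 : ℝ) 1, |f z| ≤ M) :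
    |∫ z in (j : ℝ) / n..((j : ℝ) + 1) / n, f z| ≤ M / n := by
  have hn : (0 : ℝ) < n := by exact_mod_cast (Nat.zero_lt_of_lt hj)
  have hle : (j : ℝ) / n ≤ ((j : ℝ) + 1) / n := by gcongr; linarith
  have := intervalIntegral.norm_integral_le_of_norm_le_const (C := M) (f := f)
    fun z hz => hf z (cell_subset_Icc hj (Set.uIcc_of_le hle ▸ Set.uIoc_subset_uIcc hz))
  rwa [show ((j : ℝ) + 1) / n - j / n = 1 / n by field_simp; ring, abs_of_pos (by positivity),
    mul_one_div] at this

lemma abs_integral_cell_sub_le (t : ℕ) {n j : ℕ} (hj : j < n) :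
    |(∫ z in (j : ℝ) / n..((j : ℝ) + 1) / n, (z * (1 - z)) ^ t)
        - ((j : ℝ) / n * (1 - j / n)) ^ t / n| ≤ t / n ^ 2 := by
  have hn : (0 : ℝ) < n := by exact_mod_cast (Nat.zero_lt_of_lt hj)
  have hle : (j : ℝ) / n ≤ ((j : ℝ) + 1) / n := by gcongr; linarith
  have hlen : ((j : ℝ) + 1) / n - j / n = 1 / n := by field_simp; ring
  have := abs_integral_sub_mul_le hle (g := fun z => (z * (1 - z)) ^ t) (δ := t * (1 / n))
    (Continuous.intervalIntegrable (by fun_prop) _ _)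
    fun z hz => (abs_pow_mul_one_sub_sub_le t (cell_subset_Icc hj hz)
      (cell_subset_Icc hj ⟨le_rfl, hle⟩)).trans <| by
        gcongr
        rw [abs_of_nonneg (sub_nonneg.2 hz.1)]
        linarith [hz.2]
  rw [hlen] at this
  convert this using 2 <;> field_simp

lemma abs_pnn_mul_betaFun_sub_integral_le {t n j : ℕ} (hn : 4 * t < n) (hj : j < n) :
    |pnn t n j * betaFun ((t : ℝ) + 1) ((t : ℝ) + 1)
        - ∫ z in (j : ℝ) / n..((j : ℝ) + 1) / n, (z * (1 - z)) ^ t|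
      ≤ (4 ^ (t + 1) * t * (3 * t + 1) + t) / n ^ 2 := by
  rw [pnn_mul_betaFun (by omega) hj]
  have hratio := abs_descFactorial_ratio_sub_le (t := t) (X := j) (N := n)
    (by exact_mod_cast hn) (Nat.cast_nonneg j) (by exact_mod_cast hj)
  have hcell := abs_integral_cell_sub_le t hj
  rw [abs_sub_comm] at hcell
  calc _ ≤ _ := abs_sub_le _ (((j : ℝ) / n * (1 - j / n)) ^ t / n) _
    _ ≤ _ := add_le_add hratio hcell
    _ = _ := by ring

-- With `α = 1/2` we have `T = 2(n-1)/3`, so `[j > T]` switches near `2n/3`, `[j' ≤ T]` near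
-- `n/3` and `[j ≤ j']` near `n/2`: the breakpoints of the shape function, scaled by `n`.
def NearBreakpoint (n j : ℕ) : Prop :=
  |(j : ℝ) - n / 3| ≤ 2 ∨ |(j : ℝ) - n / 2| ≤ 2 ∨ |(j : ℝ) - 2 * n / 3| ≤ 2

lemma card_filter_abs_sub_le (s : Finset ℕ) (x : ℝ) (w : ℕ) :
    (s.filter fun j : ℕ => |(j : ℝ) - x| ≤ w).card ≤ 2 * w + 1 := by
  have hceil := Nat.le_ceil (x - w)
  calc (s.filter fun j : ℕ => |(j : ℝ) - x| ≤ w).card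
      ≤ (Icc ⌈x - w⌉₊ (⌈x - w⌉₊ + 2 * w)).card := card_le_card fun j hj => by
        obtain ⟨-, hj⟩ := mem_filter.1 hj
        rw [abs_le] at hj
        refine mem_Icc.2 ⟨Nat.ceil_le.2 (by linarith), ?_⟩
        exact_mod_cast (show (j : ℝ) ≤ ⌈x - w⌉₊ + 2 * w by linarith)
    _ = 2 * w + 1 := by rw [Nat.card_Icc]; omega

lemma card_filter_nearBreakpoint_le (n : ℕ) :
    ((range n).filter (NearBreakpoint n)).card ≤ 15 := by
  set A := fun x : ℝ => (range n).filter fun j : ℕ => |(j : ℝ) - x| ≤ (2 : ℕ)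
  have hA (x : ℝ) : (A x).card ≤ 5 := card_filter_abs_sub_le (range n) x 2
  calc ((range n).filter (NearBreakpoint n)).card
      ≤ (A (n / 3) ∪ A (n / 2) ∪ A (2 * n / 3)).card := card_le_card fun j hj => by
        simp only [A, mem_filter, mem_union, NearBreakpoint, Nat.cast_ofNat] at hj ⊢
        tauto
    _ ≤ (A (n / 3)).card + (A (n / 2)).card + (A (2 * n / 3)).card :=
        (card_union_le _ _).trans (Nat.add_le_add_right (card_union_le _ _) _)
    _ ≤ 15 := by linarith [hA (n / 3), hA (n / 2), hA (2 * n / 3)]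

lemma indA_add_indA_mem_Icc (α : ℝ) (n j : ℕ) :
    indA1 α n j + indA2 α n j ∈ Set.Icc (0 : ℝ) 2 := by
  unfold indA1 indA2
  constructor <;> grind

lemma indA_add_indA_eq_of_not_nearBreakpoint {n j : ℕ} {z : ℝ} (hj : j < n)
    (hfar : ¬ NearBreakpoint n j) (hz : z ∈ Set.Icc ((j : ℝ) / n) (((j : ℝ) + 1) / n)) :
    indA1 (1 / 2) n j + indA2 (1 / 2) n j
      = 2 * if (1 / 3 < z ∧ z < 1 / 2) ∨ (2 / 3 < z ∧ z ≤ 1) then 1 else 0 := by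
  have hn : (0 : ℝ) < n := by exact_mod_cast (Nat.zero_lt_of_lt hj)
  have hz_le : z ≤ 1 := (cell_subset_Icc hj hz).2
  obtain ⟨hz1, hz2⟩ := hz
  rw [div_le_iff₀ hn] at hz1
  rw [le_div_iff₀ hn] at hz2
  simp only [NearBreakpoint, not_or, not_le, lt_abs] at hfar
  have hlt (c : ℝ) : c < z ↔ n * c < n * z := (mul_lt_mul_iff_of_pos_left hn).symm
  have hgt (c : ℝ) : z < c ↔ n * z < n * c := (mul_lt_mul_iff_of_pos_left hn).symm
  have := hlt (1 / 3); have := hgt (1 / 2); have := hlt (2 / 3)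
  rw [indA1, indA2, show ((n : ℝ) - 1) / (1 + 1 / 2) = 2 * (n - 1) / 3 by ring]
  grind

noncomputable def shapeFun (t : ℕ) (z : ℝ) : ℝ :=
  2 * (if (1/3 < z ∧ z < 1/2) ∨ (2/3 < z ∧ z ≤ 1) then (1:ℝ) else 0)
    * z ^ (t : ℝ) * (1 - z) ^ (t : ℝ) / betaFun ((t : ℝ) + 1) ((t : ℝ) + 1)

lemma shapeFun_eq (t : ℕ) (z : ℝ) :
    shapeFun t z = (2 * if (1/3 < z ∧ z < 1/2) ∨ (2/3 < z ∧ z ≤ 1) then (1:ℝ) else 0)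
      * (z * (1 - z)) ^ t / betaFun ((t : ℝ) + 1) ((t : ℝ) + 1) := by
  rw [shapeFun, Real.rpow_natCast, Real.rpow_natCast, mul_pow, mul_assoc _ (z ^ t)]

lemma abs_shapeFun_le (t : ℕ) {z : ℝ} (hz : z ∈ Set.Icc (0 : ℝ) 1) :
    |shapeFun t z| ≤ 2 / betaFun ((t : ℝ) + 1) ((t : ℝ) + 1) := by
  have hind :
      |2 * if (1/3 < z ∧ z < 1/2) ∨ (2/3 < z ∧ z ≤ 1) then (1:ℝ) else 0| ≤ 2 := by
    split_ifs <;> norm_num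
  rw [shapeFun_eq, abs_div, abs_of_pos (betaFun_natCast_add_one_pos t t), abs_mul]
  refine div_le_div_of_nonneg_right ?_ (betaFun_natCast_add_one_pos t t).le
  simpa using mul_le_mul hind (abs_pow_mul_one_sub_le_one t hz) (abs_nonneg _) zero_le_two

lemma integral_shapeFun_of_not_nearBreakpoint {t n j : ℕ} (hj : j < n)
    (hfar : ¬ NearBreakpoint n j) :
    ∫ z in (j : ℝ) / n..((j : ℝ) + 1) / n, shapeFun t z
      = (indA1 (1 / 2) n j + indA2 (1 / 2) n j)
        * (∫ z in (j : ℝ) / n..((j : ℝ) + 1) / n, (z * (1 - z)) ^ t)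
        / betaFun ((t : ℝ) + 1) ((t : ℝ) + 1) := by
  have hn : (0 : ℝ) < n := by exact_mod_cast (Nat.zero_lt_of_lt hj)
  have hle : (j : ℝ) / n ≤ ((j : ℝ) + 1) / n := by gcongr; linarith
  rw [mul_div_right_comm, ← intervalIntegral.integral_const_mul]
  refine intervalIntegral.integral_congr fun z hz => ?_
  rw [Set.uIcc_of_le hle] at hz
  rw [shapeFun_eq, indA_add_indA_eq_of_not_nearBreakpoint hj hfar hz]
  ring

lemma abs_weight_sub_integral_le {t n j : ℕ} (hn : 4 * t < n) (hj : j < n) :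
    |pnn t n j * (indA1 (1/2) n j + indA2 (1/2) n j)
        - ∫ z in (j : ℝ) / n..((j : ℝ) + 1) / n, shapeFun t z|
      ≤ 2 * ((4 ^ (t + 1) * t * (3 * t + 1) + t) / n ^ 2)
          / betaFun ((t : ℝ) + 1) ((t : ℝ) + 1)
        + if NearBreakpoint n j then 4 / n / betaFun ((t : ℝ) + 1) ((t : ℝ) + 1) else 0 := by
  have hB := betaFun_natCast_add_one_pos t t
  obtain ⟨hc0, hc2⟩ := indA_add_indA_mem_Icc (1/2) n j
  set B := betaFun ((t : ℝ) + 1) ((t : ℝ) + 1)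
  set c := indA1 (1/2) n j + indA2 (1/2) n j
  set q := ∫ z in (j : ℝ) / n..((j : ℝ) + 1) / n, (z * (1 - z)) ^ t
  set I := ∫ z in (j : ℝ) / n..((j : ℝ) + 1) / n, shapeFun t z
  have hpq : |c * (pnn t n j - q / B)|
      ≤ 2 * ((4 ^ (t + 1) * t * (3 * t + 1) + t) / n ^ 2) / B := by
    rw [show pnn t n j - q / B = (pnn t n j * B - q) / B by field_simp, abs_mul, abs_div,
      abs_of_pos hB, abs_of_nonneg hc0, ← mul_div_assoc]
    gcongr
    exact abs_pnn_mul_betaFun_sub_integral_le hn hj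
  rw [show pnn t n j * c - I = c * (pnn t n j - q / B) + (c * q / B - I) by ring]
  refine (abs_add_le _ _).trans (add_le_add hpq ?_)
  split_ifs with hnear
  · have hq : |q| ≤ 1 / n := abs_integral_cell_le hj fun z hz => abs_pow_mul_one_sub_le_one t hz
    have hI : |I| ≤ 2 / B / n := abs_integral_cell_le hj fun z hz => abs_shapeFun_le t hz
    calc |c * q / B - I| ≤ |c * q / B| + |I| := abs_sub _ _
      _ ≤ 2 * (1 / n) / B + 2 / B / n := by
        rw [abs_div, abs_mul, abs_of_nonneg hc0, abs_of_pos hB]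
        gcongr
      _ = 4 / n / B := by ring
  · rw [show I = c * q / B from integral_shapeFun_of_not_nearBreakpoint hj hnear, sub_self,
      abs_zero]

/-- **Smoothness of the shape function.** For QuickMergesort with buffer parameter
`α = 1/2` and median-of-`(2t+1)` pivots, the weights `w_{n,j} = p_n(j)·(A₁(j)+A₂(j))`
are approximated by the shape function
`w(z) = 2·[1/3 < z < 1/2 ∨ 2/3 < z ≤ 1]·z^t (1−z)^t / B(t+1,t+1)` at rate `O(n^{−1})`. -/
theorem shape_function_condition (t : ℕ) :
    ∃ C : ℝ, ∃ N : ℕ, ∀ n ≥ N,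
      (∑ j ∈ Finset.range n,
        |pnn t n j * (indA1 (1/2) n j + indA2 (1/2) n j)
          - ∫ z in (j : ℝ) / n..((j : ℝ) + 1) / n,
              2 * (if (1/3 < z ∧ z < 1/2) ∨ (2/3 < z ∧ z ≤ 1) then (1:ℝ) else 0)
                * z ^ (t : ℝ) * (1 - z) ^ (t : ℝ) / betaFun ((t : ℝ) + 1) ((t : ℝ) + 1)|)
      ≤ C * (n : ℝ)⁻¹ := by
  have hB := betaFun_natCast_add_one_pos t t
  set B := betaFun ((t : ℝ) + 1) ((t : ℝ) + 1)
  set K : ℝ := 4 ^ (t + 1) * t * (3 * t + 1) + t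
  refine ⟨(2 * K + 60) / B, 4 * t + 1, fun n hn => ?_⟩
  have hn0 : (0 : ℝ) < n := by exact_mod_cast (show 0 < n by omega)
  calc _ ≤ ∑ j ∈ range n,
          (2 * (K / n ^ 2) / B + if NearBreakpoint n j then 4 / n / B else 0) :=
        sum_le_sum fun j hj => abs_weight_sub_integral_le (by omega) (mem_range.1 hj)
    _ = n * (2 * (K / n ^ 2) / B) + ((range n).filter (NearBreakpoint n)).card * (4 / n / B) := by
        rw [sum_add_distrib, sum_const, card_range, ← sum_filter, sum_const, nsmul_eq_mul,
          nsmul_eq_mul]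
    _ ≤ n * (2 * (K / n ^ 2) / B) + 15 * (4 / n / B) := by
        gcongr
        exact_mod_cast card_filter_nearBreakpoint_le n
    _ = (2 * K + 60) / B * (n : ℝ)⁻¹ := by field_simp; ring
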